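/- arXiv:math/0609020 — 4 statements merged into one kernel-verified Lean document; each statement's English description precedes it below -/
import Mathlib

section
/- Let F₀ : ℝ → [0,1] be monotone nondecreasing and continuous on an interval [a, b], let G be a measure on ℝ with a continuous positive density g on [a,b] with respect to Lebesgue measure, and let (Fₙ) be a sequence of monotone nondecreasing functions ℝ → [0,1] with ∫_{[a,b]} |Fₙ(t) - F₀(t)| dG(t) → 0. Then sup_{t ∈ [a', b']} |Fₙ(t) - F₀(t)| → 0 for any a < a' < b' < b. -/
/-!
Suppose `|Fₙ t - F₀ t| ≥ ε` at some `t ∈ [a', b']`. By uniform continuity `F₀` moves by at most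
`ε / 2` within distance `δ` of `t`, and `Fₙ` is monotone, so `|Fₙ - F₀| ≥ ε / 2` on all of
`[t, t + δ]` (if `Fₙ t ≥ F₀ t + ε`) or on all of `[t - δ, t]` (if `Fₙ t ≤ F₀ t - ε`). Since
`g ≥ c` there, the `L¹(G)` distance is at least `c δ ε / 2`, a bound independent of `n` and `t`.
-/

open MeasureTheory Set Filter

lemma mul_sub_le_setIntegral_Icc {φ : ℝ → ℝ} {a b u v m : ℝ}
    (hφ : IntegrableOn φ (Icc a b)) (hφ_nonneg : ∀ t ∈ Icc a b, 0 ≤ φ t)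
    (huv : u ≤ v) (hsub : Icc u v ⊆ Icc a b) (hm : ∀ t ∈ Icc u v, m ≤ φ t) :
    m * (v - u) ≤ ∫ t in Icc a b, φ t := by
  calc m * (v - u) = ∫ _ in Icc u v, m := by
        rw [setIntegral_const, measureReal_def, Real.volume_Icc,
          ENNReal.toReal_ofReal (sub_nonneg.mpr huv), smul_eq_mul, mul_comm]
    _ ≤ ∫ t in Icc u v, φ t :=
        setIntegral_mono_on (integrable_const m) (hφ.mono_set hsub) measurableSet_Icc hm
    _ ≤ ∫ t in Icc a b, φ t :=
        setIntegral_mono_set hφ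
          ((ae_restrict_iff' measurableSet_Icc).mpr (.of_forall hφ_nonneg)) hsub.eventuallyLE

lemma Monotone.exists_Icc_half_le_abs_sub {f h : ℝ → ℝ} (hf : Monotone f) {t δ ε : ℝ}
    (hδ : 0 ≤ δ) (hε : ε ≤ |f t - h t|)
    (hh : ∀ s ∈ Icc (t - δ) (t + δ), dist (h s) (h t) ≤ ε / 2) :
    ∃ u ∈ Icc (t - δ) t, ∀ s ∈ Icc u (u + δ), ε / 2 ≤ |f s - h s| := by
  rcases le_total (h t) (f t) with hht | hft
  · refine ⟨t, ⟨by linarith, le_rfl⟩, fun s hs => ?_⟩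
    have hεt : ε ≤ f t - h t := by rwa [abs_of_nonneg (sub_nonneg.mpr hht)] at hε
    have hhs := (abs_le.mp (hh s ⟨by linarith [hs.1], hs.2⟩)).2
    linarith [hf hs.1, le_abs_self (f s - h s)]
  · refine ⟨t - δ, ⟨le_rfl, by linarith⟩, fun s hs => ?_⟩
    have hεt : ε ≤ h t - f t := by rwa [abs_of_nonpos (sub_nonpos.mpr hft), neg_sub] at hε
    have hhs := (abs_le.mp (hh s ⟨hs.1, by linarith [hs.2]⟩)).1
    linarith [hf (show s ≤ t by linarith [hs.2]), neg_abs_le (f s - h s)]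

theorem stmt_6_general (a b a' b' c : ℝ) (hc : 0 < c)
    (F₀ : ℝ → ℝ) (F : ℕ → ℝ → ℝ) (g : ℝ → ℝ)
    (hF₀cont : ContinuousOn F₀ (Set.Icc a b))
    (hgcont : ContinuousOn g (Set.Icc a b))
    (hglb : ∀ t ∈ Set.Icc a b, c ≤ g t)
    (hFmono : ∀ n, Monotone (F n))
    (hL1 : Filter.Tendsto (fun n => ∫ t in Set.Icc a b, |F n t - F₀ t| * g t)
      Filter.atTop (nhds 0))
    (haa' : a < a') (hb'b : b' < b) :
    ∀ ε > 0, ∃ N : ℕ, ∀ n ≥ N, ∀ t ∈ Set.Icc a' b', |F n t - F₀ t| < ε := by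
  intro ε hε
  obtain ⟨δ, hδ, hF₀δ⟩ := Metric.uniformContinuousOn_iff_le.mp
    (isCompact_Icc.uniformContinuousOn_of_continuous hF₀cont) (ε / 2) (half_pos hε)
  set δ₀ := min δ (min (a' - a) (b - b'))
  have hδ₀ : 0 < δ₀ := lt_min hδ (lt_min (by linarith) (by linarith))
  obtain ⟨hδ₀δ, hδ₀a, hδ₀b⟩ : δ₀ ≤ δ ∧ δ₀ ≤ a' - a ∧ δ₀ ≤ b - b' :=
    ⟨min_le_left _ _, (min_le_right _ _).trans (min_le_left _ _),
      (min_le_right _ _).trans (min_le_right _ _)⟩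
  have hint (n : ℕ) : IntegrableOn (fun t => |F n t - F₀ t| * g t) (Icc a b) :=
    IntegrableOn.mul_continuousOn (Integrable.abs
      (((hFmono n).locallyIntegrable.integrableOn_isCompact isCompact_Icc).sub
        hF₀cont.integrableOn_Icc)) hgcont isCompact_Icc
  obtain ⟨N, hN⟩ := eventually_atTop.mp
    (hL1.eventually (gt_mem_nhds (by positivity : 0 < ε / 2 * c * δ₀)))
  refine ⟨N, fun n hn t ht => lt_of_not_ge fun hεt => (hN n hn).not_ge ?_⟩
  have hnear : ∀ s ∈ Icc (t - δ₀) (t + δ₀), s ∈ Icc a b := fun s hs =>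
    ⟨by linarith [hs.1, ht.1], by linarith [hs.2, ht.2]⟩
  obtain ⟨u, hu, hfar⟩ := (hFmono n).exists_Icc_half_le_abs_sub hδ₀.le hεt fun s hs =>
    hF₀δ s (hnear s hs) t (hnear t ⟨by linarith, by linarith⟩)
      (by rw [Real.dist_eq, abs_le]; constructor <;> linarith [hs.1, hs.2])
  have hsub : Icc u (u + δ₀) ⊆ Icc a b := fun s hs =>
    hnear s ⟨by linarith [hs.1, hu.1], by linarith [hs.2, hu.2]⟩
  simpa using mul_sub_le_setIntegral_Icc (hint n)
    (fun s hs => mul_nonneg (abs_nonneg _) (hc.le.trans (hglb s hs))) (by linarith) hsub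
    fun s hs => mul_le_mul (hfar s hs) (hglb s (hsub hs)) hc.le (abs_nonneg _)

theorem stmt_6 (a b a' b' c : ℝ) (hc : 0 < c)
    (F₀ : ℝ → ℝ) (F : ℕ → ℝ → ℝ) (g : ℝ → ℝ)
    (hF₀mono : Monotone F₀) (hF₀01 : ∀ t, F₀ t ∈ Set.Icc (0:ℝ) 1)
    (hF₀cont : ContinuousOn F₀ (Set.Icc a b))
    (hgcont : ContinuousOn g (Set.Icc a b))
    (hglb : ∀ t ∈ Set.Icc a b, c ≤ g t)
    (hFmono : ∀ n, Monotone (F n)) (hF01 : ∀ n t, F n t ∈ Set.Icc (0:ℝ) 1)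
    (hL1 : Filter.Tendsto (fun n => ∫ t in Set.Icc a b, |F n t - F₀ t| * g t)
      Filter.atTop (nhds 0))
    (haa' : a < a') (ha'b' : a' < b') (hb'b : b' < b) :
    ∀ ε > 0, ∃ N : ℕ, ∀ n ≥ N, ∀ t ∈ Set.Icc a' b', |F n t - F₀ t| < ε :=
  stmt_6_general a b a' b' c hc F₀ F g hF₀cont hgcont hglb hFmono hL1 haa' hb'b
end

section
/- Let F : ℝ → ℝ be monotone nondecreasing and continuous at x₀, and let (Fₙ) be monotone nondecreasing functions. If Fₙ(x) → F(x) for all x in a dense subset of a neighborhood of x₀, then Fₙ converges to F uniformly on any compact interval on which F is continuous and the pointwise convergence holds on a dense set. -/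
theorem stmt_7 (a b : ℝ) (F : ℝ → ℝ) (Fn : ℕ → ℝ → ℝ) (U D : Set ℝ)
    (hU : IsOpen U) (hKU : Set.Icc a b ⊆ U) (hDU : D ⊆ U) (hdense : U ⊆ closure D)
    (hFmono : Monotone F) (hFnmono : ∀ n, Monotone (Fn n))
    (hFcont : ∀ x ∈ Set.Icc a b, ContinuousAt F x)
    (hconv : ∀ x ∈ D, Filter.Tendsto (fun n => Fn n x) Filter.atTop (nhds (F x))) :
    ∀ ε > 0, ∃ N : ℕ, ∀ n ≥ N, ∀ x ∈ Set.Icc a b, |Fn n x - F x| < ε := by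
  intro ε hε
  -- density: any nonempty open subset of U meets D
  have hD : ∀ V : Set ℝ, IsOpen V → V ⊆ U → V.Nonempty → (V ∩ D).Nonempty := by
    rintro V hV hVU ⟨v, hv⟩
    have hvc : v ∈ closure D := hdense (hVU hv)
    obtain ⟨d, hdV, hdD⟩ := _root_.mem_closure_iff.mp hvc V hV hv
    exact ⟨d, hdV, hdD⟩
  have key : ∀ x : ℝ, x ∈ Set.Icc a b → ∃ d₁ d₂ : ℝ,
      d₁ ∈ D ∧ d₂ ∈ D ∧ d₁ < x ∧ x < d₂ ∧ F d₂ - F d₁ < ε / 2 := by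
    intro x hx
    obtain ⟨δ, hδ, hball⟩ := Metric.isOpen_iff.mp hU x (hKU hx)
    obtain ⟨δ', hδ', hF⟩ := Metric.continuousAt_iff.mp (hFcont x hx) (ε / 8) (by linarith)
    set r := min δ δ' with hr
    have hr0 : 0 < r := lt_min hδ hδ'
    have hrδ : r ≤ δ := min_le_left _ _
    have hrδ' : r ≤ δ' := min_le_right _ _
    have hsub : ∀ y, x - r < y → y < x + r → y ∈ Metric.ball x δ := by
      intro y h1 h2
      rw [Metric.mem_ball, Real.dist_eq, abs_lt]
      constructor <;> linarith
    have h1 : ((Set.Ioo (x - r) x) ∩ D).Nonempty := by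
      apply hD _ isOpen_Ioo
      · intro y hy; exact hball (hsub y hy.1 (by have := hy.2; linarith))
      · exact ⟨x - r / 2, by constructor <;> linarith⟩
    have h2 : ((Set.Ioo x (x + r)) ∩ D).Nonempty := by
      apply hD _ isOpen_Ioo
      · intro y hy; exact hball (hsub y (by have := hy.1; linarith) hy.2)
      · exact ⟨x + r / 2, by constructor <;> linarith⟩
    obtain ⟨d₁, ⟨hd₁l, hd₁r⟩, hd₁D⟩ := h1
    obtain ⟨d₂, ⟨hd₂l, hd₂r⟩, hd₂D⟩ := h2
    refine ⟨d₁, d₂, hd₁D, hd₂D, hd₁r, hd₂l, ?_⟩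
    have e1 : |F d₁ - F x| < ε / 8 := by
      have : dist d₁ x < δ' := by rw [Real.dist_eq, abs_lt]; constructor <;> linarith
      have := hF this; rwa [Real.dist_eq] at this
    have e2 : |F d₂ - F x| < ε / 8 := by
      have : dist d₂ x < δ' := by rw [Real.dist_eq, abs_lt]; constructor <;> linarith
      have := hF this; rwa [Real.dist_eq] at this
    rw [abs_lt] at e1 e2
    linarith [e1.1, e2.2]
  choose! d₁ d₂ hd₁D hd₂D hlt₁ hlt₂ hgap using key
  have hcover : Set.Icc a b ⊆ ⋃ x ∈ Set.Icc a b, Set.Ioo (d₁ x) (d₂ x) := by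
    intro x hx
    exact Set.mem_biUnion hx ⟨hlt₁ x hx, hlt₂ x hx⟩
  obtain ⟨t, hts, htf, htcover⟩ :=
    isCompact_Icc.elim_finite_subcover_image (fun x _ => isOpen_Ioo) hcover
  have hev : ∀ᶠ n in Filter.atTop, ∀ i ∈ t,
      |Fn n (d₁ i) - F (d₁ i)| < ε / 8 ∧ |Fn n (d₂ i) - F (d₂ i)| < ε / 8 := by
    rw [Filter.eventually_all_finite htf]
    intro i hi
    have hi' : i ∈ Set.Icc a b := hts hi
    have t1 := (hconv (d₁ i) (hd₁D i hi')).eventually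
      (eventually_abs_sub_lt (F (d₁ i)) (by linarith : (0:ℝ) < ε / 8))
    have t2 := (hconv (d₂ i) (hd₂D i hi')).eventually
      (eventually_abs_sub_lt (F (d₂ i)) (by linarith : (0:ℝ) < ε / 8))
    exact t1.and t2
  obtain ⟨N, hN⟩ := Filter.eventually_atTop.mp hev
  refine ⟨N, fun n hn x hx => ?_⟩
  obtain ⟨i, hi, hxIoo⟩ := Set.mem_iUnion₂.mp (htcover hx)
  have hi' : i ∈ Set.Icc a b := hts hi
  obtain ⟨e1, e2⟩ := hN n hn i hi
  rw [abs_lt] at e1 e2 ⊢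
  have m1 : Fn n (d₁ i) ≤ Fn n x := hFnmono n hxIoo.1.le
  have m2 : Fn n x ≤ Fn n (d₂ i) := hFnmono n hxIoo.2.le
  have m3 : F (d₁ i) ≤ F x := hFmono hxIoo.1.le
  have m4 : F x ≤ F (d₂ i) := hFmono hxIoo.2.le
  have hg := hgap i hi'
  constructor <;> linarith [e1.1, e1.2, e2.1, e2.2]
end

section
/- Let g, f be continuous functions near t₀ with g(t₀) > 0 and f(t₀) > 0, F monotone nondecreasing and continuously differentiable at t₀ with F' = f. Then there exists r > 0 such that for all s, w with t₀ - 2r ≤ w ≤ s ≤ t₀ + 2r, ∫_w^s (F(s) - F(u)) g(u) du ≥ (1/4) g(t₀) f(t₀) (s - w)². -/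
open MeasureTheory

theorem stmt_15 (t₀ δ : ℝ) (hδ : 0 < δ) (F f g : ℝ → ℝ)
    (hFmono : Monotone F)
    (hderiv : ∀ t ∈ Set.Icc (t₀ - δ) (t₀ + δ), HasDerivAt F (f t) t)
    (hfcont : ContinuousOn f (Set.Icc (t₀ - δ) (t₀ + δ)))
    (hgcont : ContinuousOn g (Set.Icc (t₀ - δ) (t₀ + δ)))
    (hf0 : 0 < f t₀) (hg0 : 0 < g t₀) :
    ∃ r > 0, ∀ w s : ℝ, t₀ - 2 * r ≤ w → w ≤ s → s ≤ t₀ + 2 * r →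
      (1/4) * g t₀ * f t₀ * (s - w) ^ 2 ≤ ∫ u in w..s, (F s - F u) * g u := by
  have hmem : Set.Icc (t₀ - δ) (t₀ + δ) ∈ nhds t₀ :=
    Icc_mem_nhds (by linarith) (by linarith)
  have hfc : ContinuousAt f t₀ := hfcont.continuousAt hmem
  have hgc : ContinuousAt g t₀ := hgcont.continuousAt hmem
  obtain ⟨η₁, hη₁, hf1⟩ := Metric.continuousAt_iff.mp hfc (f t₀ / 4) (by linarith)
  obtain ⟨η₂, hη₂, hg1⟩ := Metric.continuousAt_iff.mp hgc (g t₀ / 4) (by linarith)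
  set r := min (min η₁ η₂) δ / 4 with hrdef
  have hrpos : 0 < r := by
    have := lt_min (lt_min hη₁ hη₂) hδ
    positivity
  have hr1 : 2 * r < η₁ := by
    have h1 : min (min η₁ η₂) δ ≤ η₁ := le_trans (min_le_left _ _) (min_le_left _ _)
    have := lt_min (lt_min hη₁ hη₂) hδ
    nlinarith [lt_min (lt_min hη₁ hη₂) hδ]
  have hr2 : 2 * r < η₂ := by
    have h1 : min (min η₁ η₂) δ ≤ η₂ := le_trans (min_le_left _ _) (min_le_right _ _)
    nlinarith [lt_min (lt_min hη₁ hη₂) hδ]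
  have hr3 : 2 * r ≤ δ := by
    have h1 : min (min η₁ η₂) δ ≤ δ := min_le_right _ _
    nlinarith
  refine ⟨r, hrpos, ?_⟩
  intro w s hw hws hs
  have hsub : Set.Icc (t₀ - 2 * r) (t₀ + 2 * r) ⊆ Set.Icc (t₀ - δ) (t₀ + δ) :=
    Set.Icc_subset_Icc (by linarith) (by linarith)
  have hfb : ∀ t ∈ Set.Icc (t₀ - 2 * r) (t₀ + 2 * r), 3 / 4 * f t₀ ≤ f t := by
    intro t ht
    have hd : dist t t₀ < η₁ := by
      rw [Real.dist_eq, abs_lt]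
      constructor <;> [linarith [ht.1]; linarith [ht.2]]
    have := hf1 hd
    rw [Real.dist_eq] at this
    have := abs_lt.mp this
    linarith [this.1]
  have hgb : ∀ t ∈ Set.Icc (t₀ - 2 * r) (t₀ + 2 * r), 3 / 4 * g t₀ ≤ g t := by
    intro t ht
    have hd : dist t t₀ < η₂ := by
      rw [Real.dist_eq, abs_lt]
      constructor <;> [linarith [ht.1]; linarith [ht.2]]
    have := hg1 hd
    rw [Real.dist_eq] at this
    have := abs_lt.mp this
    linarith [this.1]
  have hIccsub : Set.Icc w s ⊆ Set.Icc (t₀ - 2 * r) (t₀ + 2 * r) :=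
    Set.Icc_subset_Icc (by linarith) (by linarith)
  -- bound F s - F u from below
  have key : ∀ u ∈ Set.Icc w s, 3 / 4 * f t₀ * (s - u) ≤ F s - F u := by
    intro u hu
    have hus : u ≤ s := hu.2
    have huIcc : Set.uIcc u s ⊆ Set.Icc (t₀ - δ) (t₀ + δ) := by
      rw [Set.uIcc_of_le hus]
      exact (Set.Icc_subset_Icc hu.1 le_rfl).trans (hIccsub.trans hsub)
    have hfi : IntervalIntegrable f volume u s :=
      (hfcont.mono huIcc).intervalIntegrable
    have hFTC : ∫ x in u..s, f x = F s - F u :=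
      intervalIntegral.integral_eq_sub_of_hasDerivAt
        (fun x hx => hderiv x (huIcc hx)) hfi
    have hmono : ∫ _ in u..s, (3 / 4 * f t₀ : ℝ) ≤ ∫ x in u..s, f x := by
      apply intervalIntegral.integral_mono_on hus intervalIntegrable_const hfi
      intro x hx
      exact hfb x (hIccsub ⟨le_trans hu.1 hx.1, hx.2⟩)
    rw [intervalIntegral.integral_const, smul_eq_mul] at hmono
    rw [hFTC] at hmono
    linarith
  -- continuity of F on the relevant interval
  have hFcont : ContinuousOn F (Set.Icc (t₀ - δ) (t₀ + δ)) := fun x hx =>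
    (hderiv x hx).continuousAt.continuousWithinAt
  have huIccws : Set.uIcc w s ⊆ Set.Icc (t₀ - δ) (t₀ + δ) := by
    rw [Set.uIcc_of_le hws]; exact hIccsub.trans hsub
  have hInt1 : IntervalIntegrable (fun u => (F s - F u) * g u) volume w s :=
    ((continuousOn_const.sub (hFcont.mono huIccws)).mul
      (hgcont.mono huIccws)).intervalIntegrable
  have hInt2 : IntervalIntegrable
      (fun u => (3 / 4 * f t₀ * (s - u)) * (3 / 4 * g t₀)) volume w s := by
    exact ((continuous_const.mul (continuous_const.sub continuous_id)).mul
      continuous_const).intervalIntegrable _ _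
  have hmono : ∫ u in w..s, (3 / 4 * f t₀ * (s - u)) * (3 / 4 * g t₀)
      ≤ ∫ u in w..s, (F s - F u) * g u := by
    apply intervalIntegral.integral_mono_on hws hInt2 hInt1
    intro u hu
    have h1 := key u hu
    have h2 := hgb u (hIccsub hu)
    have h3 : (0 : ℝ) ≤ 3 / 4 * f t₀ * (s - u) := by
      have := hu.2; nlinarith
    have h4 : (0 : ℝ) ≤ 3 / 4 * g t₀ := by positivity
    exact mul_le_mul h1 h2 h4 (le_trans h3 h1)
  have hcalc : ∫ u in w..s, (3 / 4 * f t₀ * (s - u)) * (3 / 4 * g t₀)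
      = 9 / 16 * (f t₀ * g t₀) * (s * (s - w) - (s ^ 2 - w ^ 2) / 2) := by
    have h1 : ∀ u : ℝ, (3 / 4 * f t₀ * (s - u)) * (3 / 4 * g t₀)
        = 9 / 16 * (f t₀ * g t₀) * s - 9 / 16 * (f t₀ * g t₀) * u := fun u => by ring
    simp_rw [h1]
    rw [intervalIntegral.integral_sub intervalIntegrable_const
      ((by fun_prop : Continuous fun u : ℝ => 9 / 16 * (f t₀ * g t₀) * u).intervalIntegrable _ _),
      intervalIntegral.integral_const, intervalIntegral.integral_const_mul,
      integral_id]
    simp [smul_eq_mul]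
    ring
  rw [hcalc] at hmono
  nlinarith [sq_nonneg (s - w), mul_pos hf0 hg0]
end

section
/- Let T be a random variable and Δ a random vector such that E[ζ | T] = 0 where ζ = ζ(T, Δ) is bounded. Then for any θ > 0, any measurable set A ⊂ ℝ, and i.i.d. copies (Tᵢ, Δᵢ), i = 1,…,n: E[ exp( θ Σ_{i=1}^n 1_A(Tᵢ) ζ(Tᵢ, Δᵢ) ) ] ≤ exp( n Σ_{ℓ=2}^∞ (θ^ℓ/ℓ!) E[ 1_A(T) |E(ζ^ℓ | T)| ] ), using log(1+x) ≤ x and the exponential series with vanishing first-order term. -/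
/-!
Write `X = 1_A(T) ζ`, a bounded variable, and expand `E exp(θX) = ∑ θ^ℓ E[X^ℓ] / ℓ!`
(dominated convergence). Since `{T ∈ A}` is `σ(T)`-measurable, the defining property of
`E(· | T)` gives `E[X] = E[1_A(T) E(ζ | T)] = 0` and
`E[X^ℓ] = E[1_A(T) E(ζ^ℓ | T)] ≤ E[1_A(T) |E(ζ^ℓ | T)|]` for `ℓ ≥ 1`; hence
`E exp(θX) ≤ 1 + ∑_{ℓ ≥ 2} … ≤ exp(∑_{ℓ ≥ 2} …)` by `1 + x ≤ eˣ`. Over the product measure the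
exponential of the sum factorizes, giving the `n`-th power.
-/

open MeasureTheory Real Nat

lemma Set.indicator_one_mul {α M : Type*} [MulZeroOneClass M] (s : Set α) (f : α → M) :
    (fun a => s.indicator 1 a * f a) = s.indicator f := by
  ext a
  by_cases h : a ∈ s <;> simp [h]

section ExpSeries

variable {Ω : Type*} {mΩ : MeasurableSpace Ω} {μ : Measure Ω}

lemma summable_pow_div_factorial_mul_of_abs_le {b : ℕ → ℝ} {C : ℝ} (hb : ∀ ℓ, |b ℓ| ≤ C ^ ℓ)
    (θ : ℝ) : Summable fun ℓ => θ ^ ℓ / ℓ ! * b ℓ := by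
  refine Summable.of_norm_bounded (Real.summable_pow_div_factorial (|θ| * C)) fun ℓ => ?_
  rw [Real.norm_eq_abs, abs_mul, abs_div, abs_pow, Nat.abs_cast, mul_pow, mul_div_right_comm]
  exact mul_le_mul_of_nonneg_left (hb ℓ) (by positivity)

lemma hasSum_integral_exp_mul [IsFiniteMeasure μ] {X : Ω → ℝ} {C : ℝ}
    (hX : AEStronglyMeasurable X μ) (hXC : ∀ᵐ ω ∂μ, |X ω| ≤ C) (θ : ℝ) :
    HasSum (fun ℓ => θ ^ ℓ / ℓ ! * ∫ ω, X ω ^ ℓ ∂μ) (∫ ω, exp (θ * X ω) ∂μ) := by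
  have hbound (ℓ : ℕ) : ∀ᵐ ω ∂μ, ‖(θ * X ω) ^ ℓ / (ℓ ! : ℝ)‖ ≤ (|θ| * C) ^ ℓ / ℓ ! := by
    filter_upwards [hXC] with ω hω
    rw [norm_div, norm_pow, Real.norm_eq_abs, abs_mul, Real.norm_natCast]
    gcongr
  have hseries := hasSum_integral_of_dominated_convergence (f := fun ω => exp (θ * X ω))
    (fun ℓ _ => (|θ| * C) ^ ℓ / ℓ !) (fun ℓ => by fun_prop) hbound
    (.of_forall fun _ => Real.summable_pow_div_factorial _) (integrable_const _)
    (.of_forall fun ω => by rw [Real.exp_eq_exp_ℝ]; exact NormedSpace.expSeries_div_hasSum_exp _)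
  have hterm (ℓ : ℕ) : ∫ ω, (θ * X ω) ^ ℓ / (ℓ ! : ℝ) ∂μ = θ ^ ℓ / ℓ ! * ∫ ω, X ω ^ ℓ ∂μ := by
    rw [← integral_const_mul]
    congr with ω
    ring
  simpa only [hterm] using hseries

lemma integral_exp_mul_le_exp_tsum_of_moment_le [IsProbabilityMeasure μ] {X : Ω → ℝ} {C : ℝ}
    (hX : AEStronglyMeasurable X μ) (hXC : ∀ᵐ ω ∂μ, |X ω| ≤ C) (hmean : ∫ ω, X ω ∂μ = 0)
    {θ : ℝ} (hθ : 0 ≤ θ) {b : ℕ → ℝ} (hb : ∀ ℓ, ∫ ω, X ω ^ (ℓ + 2) ∂μ ≤ b ℓ)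
    (hbs : Summable fun ℓ => θ ^ (ℓ + 2) / (ℓ + 2)! * b ℓ) :
    ∫ ω, exp (θ * X ω) ∂μ ≤ exp (∑' ℓ, θ ^ (ℓ + 2) / (ℓ + 2)! * b ℓ) := by
  have htail := (hasSum_nat_add_iff' 2).mpr (hasSum_integral_exp_mul hX hXC θ)
  simp only [Finset.sum_range_succ, Finset.sum_range_zero, pow_zero, pow_one, hmean,
    integral_const, probReal_univ, smul_eq_mul, mul_one, mul_zero, factorial_zero, cast_one,
    div_one, zero_add, add_zero] at htail
  have hle := hasSum_le (fun ℓ => mul_le_mul_of_nonneg_left (hb ℓ) (by positivity)) htail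
    hbs.hasSum
  linarith [add_one_le_exp (∑' ℓ, θ ^ (ℓ + 2) / (ℓ + 2)! * b ℓ)]

lemma integral_exp_mul_sum_pi_eq_pow {ι : Type*} [Fintype ι] [SigmaFinite μ] (X : Ω → ℝ)
    (θ : ℝ) :
    ∫ x : ι → Ω, exp (θ * ∑ i, X (x i)) ∂(Measure.pi fun _ => μ)
      = (∫ ω, exp (θ * X ω) ∂μ) ^ Fintype.card ι := by
  simp_rw [Finset.mul_sum, Real.exp_sum]
  exact integral_fintype_prod_eq_pow fun ω => exp (θ * X ω)

end ExpSeries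

section CondExp

variable {Ω : Type*} {m mΩ : MeasurableSpace Ω} {μ : Measure Ω} {s : Set Ω} {z : Ω → ℝ}

lemma integral_indicator_eq_zero_of_condExp_eq_zero [IsFiniteMeasure μ] (hm : m ≤ mΩ)
    (hs : MeasurableSet[m] s) (hz : Integrable z μ) (hcond : μ[z | m] =ᵐ[μ] 0) :
    ∫ ω, s.indicator z ω ∂μ = 0 := by
  rw [integral_indicator (hm s hs), ← setIntegral_condExp hm hz hs,
    integral_congr_ae (ae_restrict_of_ae hcond)]
  exact integral_zero _ _

lemma integral_indicator_pow_le_integral_indicator_abs_condExp [IsFiniteMeasure μ]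
    (hm : m ≤ mΩ) (hs : MeasurableSet[m] s) {k : ℕ} (hk : k ≠ 0)
    (hz : Integrable (fun ω => z ω ^ k) μ) :
    ∫ ω, s.indicator z ω ^ k ∂μ
      ≤ ∫ ω, s.indicator (fun ω => |μ[fun ω => z ω ^ k | m] ω|) ω ∂μ := by
  have hpow : (fun ω => s.indicator z ω ^ k) = s.indicator fun ω => z ω ^ k := by
    ext ω
    by_cases h : ω ∈ s <;> simp [h, hk]
  rw [hpow, integral_indicator (hm s hs), integral_indicator (hm s hs),
    ← setIntegral_condExp hm hz hs]
  exact setIntegral_mono integrable_condExp.integrableOn integrable_condExp.abs.integrableOn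
    fun ω => le_abs_self _

lemma abs_integral_indicator_abs_condExp_pow_le [IsProbabilityMeasure μ] {C : ℝ}
    (hzC : ∀ ω, |z ω| ≤ C) (k : ℕ) :
    |∫ ω, s.indicator (fun ω => |μ[fun ω => z ω ^ k | m] ω|) ω ∂μ| ≤ C ^ k := by
  have habs (ω : Ω) : |z ω ^ k| ≤ C ^ k := by
    rw [abs_pow]
    exact pow_le_pow_left₀ (abs_nonneg _) (hzC ω) k
  have hnonneg (ω : Ω) : 0 ≤ s.indicator (fun ω => |μ[fun ω => z ω ^ k | m] ω|) ω :=
    Set.indicator_nonneg (fun _ _ => abs_nonneg _) ω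
  rw [abs_of_nonneg (integral_nonneg hnonneg)]
  calc ∫ ω, s.indicator (fun ω => |μ[fun ω => z ω ^ k | m] ω|) ω ∂μ
      ≤ ∫ ω, |μ[fun ω => z ω ^ k | m] ω| ∂μ :=
        integral_mono_of_nonneg (.of_forall hnonneg) integrable_condExp.abs
          (.of_forall (Set.indicator_le_self' fun _ _ => abs_nonneg _))
    _ ≤ ∫ ω, |z ω ^ k| ∂μ := integral_abs_condExp_le _
    _ ≤ ∫ _, C ^ k ∂μ :=
        integral_mono_of_nonneg (.of_forall fun ω => abs_nonneg _) (integrable_const _)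
          (.of_forall habs)
    _ = C ^ k := by simp

lemma integral_exp_mul_indicator_le_of_condExp_eq_zero [IsProbabilityMeasure μ] (hm : m ≤ mΩ)
    (hs : MeasurableSet[m] s) (hz : Measurable z) {C : ℝ} (hzC : ∀ ω, |z ω| ≤ C)
    (hcond : μ[z | m] =ᵐ[μ] 0) {θ : ℝ} (hθ : 0 ≤ θ) :
    ∫ ω, exp (θ * s.indicator z ω) ∂μ ≤ exp (∑' ℓ, θ ^ (ℓ + 2) / (ℓ + 2)! *
        ∫ ω, s.indicator (fun ω => |μ[fun ω => z ω ^ (ℓ + 2) | m] ω|) ω ∂μ) := by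
  have hpow_int (k : ℕ) : Integrable (fun ω => z ω ^ k) μ :=
    .of_bound (by fun_prop) (C ^ k) (.of_forall fun ω => by
      rw [Real.norm_eq_abs, abs_pow]
      exact pow_le_pow_left₀ (abs_nonneg _) (hzC ω) k)
  have hindC (ω : Ω) : |s.indicator z ω| ≤ C := by
    by_cases h : ω ∈ s <;> simp [h, hzC, (abs_nonneg _).trans (hzC ω)]
  exact integral_exp_mul_le_exp_tsum_of_moment_le (hz.indicator (hm s hs)).aestronglyMeasurable
    (.of_forall hindC)
    (integral_indicator_eq_zero_of_condExp_eq_zero hm hs (by simpa using hpow_int 1) hcond) hθ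
    (fun ℓ => integral_indicator_pow_le_integral_indicator_abs_condExp hm hs (by omega)
      (hpow_int _))
    ((summable_nat_add_iff 2).mpr
      (summable_pow_div_factorial_mul_of_abs_le (abs_integral_indicator_abs_condExp_pow_le hzC) θ))

end CondExp

theorem stmt_18 {Ω E : Type*} [MeasurableSpace Ω] [MeasurableSpace E]
    (μ : Measure Ω) [IsProbabilityMeasure μ]
    (T : Ω → ℝ) (Δ : Ω → E) (ζ : ℝ × E → ℝ)
    (hT : Measurable T) (hΔ : Measurable Δ) (hζ : Measurable ζ)
    (Cζ : ℝ) (hζbdd : ∀ p, |ζ p| ≤ Cζ)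
    (hcond : μ[fun ω => ζ (T ω, Δ ω) | MeasurableSpace.comap T inferInstance]
      =ᵐ[μ] fun _ => (0:ℝ))
    (θ : ℝ) (hθ : 0 < θ) (A : Set ℝ) (hA : MeasurableSet A) (n : ℕ) :
    ∫ x : Fin n → Ω,
        Real.exp (θ * ∑ i, Set.indicator A (fun _ => (1:ℝ)) (T (x i)) * ζ (T (x i), Δ (x i)))
        ∂(Measure.pi fun _ : Fin n => μ)
      ≤ Real.exp ((n : ℝ) * ∑' ℓ : ℕ,
          θ ^ (ℓ + 2) / (Nat.factorial (ℓ + 2)) *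
            ∫ ω, Set.indicator A (fun _ => (1:ℝ)) (T ω) *
              |(μ[fun ω' => ζ (T ω', Δ ω') ^ (ℓ + 2) |
                  MeasurableSpace.comap T inferInstance]) ω| ∂μ) := by
  set z : Ω → ℝ := fun ω => ζ (T ω, Δ ω)
  have hpull (ω : Ω) : A.indicator (fun _ => (1:ℝ)) (T ω) = (T ⁻¹' A).indicator 1 ω := by
    by_cases h : T ω ∈ A <;> simp [h]
  have hX (ω : Ω) : A.indicator (fun _ => (1:ℝ)) (T ω) * z ω = (T ⁻¹' A).indicator z ω := by
    by_cases h : T ω ∈ A <;> simp [h]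
  rw [integral_exp_mul_sum_pi_eq_pow (fun ω => A.indicator (fun _ => (1:ℝ)) (T ω) * z ω),
    Fintype.card_fin, exp_nat_mul]
  gcongr
  simp only [hX]
  simp only [hpull, Set.indicator_one_mul]
  exact integral_exp_mul_indicator_le_of_condExp_eq_zero hT.comap_le ⟨A, hA, rfl⟩
    (hζ.comp (hT.prodMk hΔ)) (fun ω => hζbdd _) hcond hθ.le
end
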